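/- arXiv:1201.1684 — 2 statements merged into one kernel-verified Lean document; each statement's English description precedes it below -/
import Mathlib

section
/- Let (W1, W2, W3) be finite-valued random variables on a probability space whose conditional mutual informations are almost balanced, i.e. I[Wi : Wj | Wk] ≤ I[Wj : Wk | Wi] + I[Wi : Wk | Wj] for all distinct i, j, k ∈ {1,2,3}. Then for every real κ > 0 and every real δ > 0 there exist positive real numbers R1, R2, R3 such that: κ·R_i ≥ H[W_i | (W_j, W_k)] + δ/4 for every i ∈ {1,2,3} (where {j,k} = {1,2,3}\{i}), and κ·(R_i + R_j) = H[(W_i, W_j) | W_k] + δ/2 for every pair of distinct i, j ∈ {1,2,3} (where k is the remaining index). -/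
open MeasureTheory ProbabilityTheory

/-- Shannon entropy of a finite-valued random variable. -/
noncomputable def shEntropy {Ω : Type*} [MeasurableSpace Ω] (μ : Measure Ω)
    {α : Type*} [Fintype α] (X : Ω → α) : ℝ :=
  - ∑ x : α, ((μ (X ⁻¹' {x})).toReal * Real.log (μ (X ⁻¹' {x})).toReal)

/-- Conditional Shannon entropy `H[X | Y]`. -/
noncomputable def shCondEntropy {Ω : Type*} [MeasurableSpace Ω] (μ : Measure Ω)
    {α β : Type*} [Fintype α] [Fintype β] (X : Ω → α) (Y : Ω → β) : ℝ :=
  shEntropy μ (fun ω => (X ω, Y ω)) - shEntropy μ Y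

/-- Mutual information `I[X : Y]`. -/
noncomputable def shMutualInfo {Ω : Type*} [MeasurableSpace Ω] (μ : Measure Ω)
    {α β : Type*} [Fintype α] [Fintype β] (X : Ω → α) (Y : Ω → β) : ℝ :=
  shEntropy μ X + shEntropy μ Y - shEntropy μ (fun ω => (X ω, Y ω))

/-- Conditional mutual information `I[X : Y | Z]`. -/
noncomputable def shCondMutualInfo {Ω : Type*} [MeasurableSpace Ω] (μ : Measure Ω)
    {α β γ : Type*} [Fintype α] [Fintype β] [Fintype γ]
    (X : Ω → α) (Y : Ω → β) (Z : Ω → γ) : ℝ :=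
  shCondEntropy μ X Z + shCondEntropy μ Y Z -
    shCondEntropy μ (fun ω => (X ω, Y ω)) Z

lemma shEntropy_comp_inj {Ω : Type*} [MeasurableSpace Ω] (μ : Measure Ω)
    {α β : Type*} [Fintype α] [Fintype β] (f : Ω → α) (e : α → β)
    (he : Function.Injective e) :
    shEntropy μ (fun ω => e (f ω)) = shEntropy μ f := by
  classical
  unfold shEntropy
  congr 1
  rw [← Finset.sum_subset (Finset.subset_univ (Finset.univ.image e))]
  · rw [Finset.sum_image (fun a _ b _ h => he h)]
    refine Finset.sum_congr rfl fun x _ => ?_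
    have hpre : (fun ω => e (f ω)) ⁻¹' {e x} = f ⁻¹' {x} := by
      ext ω; simp [he.eq_iff]
    rw [hpre]
  · intro y _ hy
    have hpre : (fun ω => e (f ω)) ⁻¹' {y} = ∅ := by
      ext ω
      simp only [Set.mem_preimage, Set.mem_singleton_iff, Set.mem_empty_iff_false, iff_false]
      intro h; exact hy (Finset.mem_image.2 ⟨f ω, Finset.mem_univ _, h⟩)
    simp [hpre]

lemma shCondEntropy_nonneg {Ω : Type*} [MeasurableSpace Ω] (μ : Measure Ω) [IsProbabilityMeasure μ]
    {α β : Type*} [Fintype α] [Fintype β] (X : Ω → α) (Y : Ω → β) :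
    0 ≤ shCondEntropy μ X Y := by
  unfold shCondEntropy shEntropy
  rw [sub_nonneg, neg_le_neg_iff, Fintype.sum_prod_type_right]
  apply Finset.sum_le_sum
  intro y _
  set p := (μ (Y ⁻¹' {y})).toReal with hp
  have hp0 : 0 ≤ p := ENNReal.toReal_nonneg
  have hp1 : p ≤ 1 := by
    rw [hp, ← ENNReal.toReal_one]
    exact ENNReal.toReal_mono ENNReal.one_ne_top prob_le_one
  have hq0 : ∀ x : α, 0 ≤ (μ ((fun ω => (X ω, Y ω)) ⁻¹' {(x, y)})).toReal :=
    fun x => ENNReal.toReal_nonneg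
  have hqp : ∀ x : α, (μ ((fun ω => (X ω, Y ω)) ⁻¹' {(x, y)})).toReal ≤ p := by
    intro x
    refine ENNReal.toReal_mono (measure_ne_top μ _) (measure_mono ?_)
    intro ω hω
    simp only [Set.mem_preimage, Set.mem_singleton_iff] at *
    rw [Prod.ext_iff] at hω
    exact hω.2
  have hsum : p ≤ ∑ x : α, (μ ((fun ω => (X ω, Y ω)) ⁻¹' {(x, y)})).toReal := by
    have hsub : Y ⁻¹' {y} ⊆ ⋃ x : α, (fun ω => (X ω, Y ω)) ⁻¹' {(x, y)} := by
      intro ω hω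
      simp only [Set.mem_preimage, Set.mem_singleton_iff] at hω
      exact Set.mem_iUnion.2 ⟨X ω, by simp [hω]⟩
    calc p ≤ (∑ x : α, μ ((fun ω => (X ω, Y ω)) ⁻¹' {(x, y)})).toReal := by
            apply ENNReal.toReal_mono
            · exact (ENNReal.sum_lt_top.2 fun _ _ => measure_lt_top μ _).ne
            · exact (measure_mono hsub).trans ((measure_iUnion_le _).trans_eq (tsum_fintype _))
      _ = ∑ x : α, (μ ((fun ω => (X ω, Y ω)) ⁻¹' {(x, y)})).toReal :=
            ENNReal.toReal_sum fun _ _ => measure_ne_top μ _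
  calc ∑ x : α, (μ ((fun ω => (X ω, Y ω)) ⁻¹' {(x, y)})).toReal *
          Real.log (μ ((fun ω => (X ω, Y ω)) ⁻¹' {(x, y)})).toReal
      ≤ ∑ x : α, (μ ((fun ω => (X ω, Y ω)) ⁻¹' {(x, y)})).toReal * Real.log p := by
        refine Finset.sum_le_sum fun x _ => ?_
        rcases (hq0 x).eq_or_lt with h | h
        · rw [← h]; simp
        · exact mul_le_mul_of_nonneg_left (Real.log_le_log h (hqp x)) (hq0 x)
    _ = (∑ x : α, (μ ((fun ω => (X ω, Y ω)) ⁻¹' {(x, y)})).toReal) * Real.log p := by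
        rw [Finset.sum_mul]
    _ ≤ p * Real.log p := mul_le_mul_of_nonpos_right hsum (Real.log_nonpos hp0 hp1)

lemma sh_pair_comm {Ω : Type*} [MeasurableSpace Ω] (μ : Measure Ω)
    {A B : Type*} [Fintype A] [Fintype B] (X : Ω → A) (Y : Ω → B) :
    shEntropy μ (fun ω => (Y ω, X ω)) = shEntropy μ (fun ω => (X ω, Y ω)) := by
  simpa using shEntropy_comp_inj μ (fun ω => (X ω, Y ω)) (fun p => (p.2, p.1))
    (by rintro ⟨a,b⟩ ⟨c,d⟩ h; simp_all)

lemma sh_assoc {Ω : Type*} [MeasurableSpace Ω] (μ : Measure Ω)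
    {A B C : Type*} [Fintype A] [Fintype B] [Fintype C] (X : Ω → A) (Y : Ω → B) (Z : Ω → C) :
    shEntropy μ (fun ω => (X ω, (Y ω, Z ω))) = shEntropy μ (fun ω => ((X ω, Y ω), Z ω)) := by
  simpa using shEntropy_comp_inj μ (fun ω => ((X ω, Y ω), Z ω)) (fun p => (p.1.1, (p.1.2, p.2)))
    (by rintro ⟨⟨a,b⟩,c⟩ ⟨⟨d,e⟩,f⟩ h; simp_all)

lemma sh213 {Ω : Type*} [MeasurableSpace Ω] (μ : Measure Ω)
    {A B C : Type*} [Fintype A] [Fintype B] [Fintype C] (X : Ω → A) (Y : Ω → B) (Z : Ω → C) :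
    shEntropy μ (fun ω => ((Y ω, X ω), Z ω)) = shEntropy μ (fun ω => ((X ω, Y ω), Z ω)) := by
  simpa using shEntropy_comp_inj μ (fun ω => ((X ω, Y ω), Z ω)) (fun p => ((p.1.2, p.1.1), p.2))
    (by rintro ⟨⟨a,b⟩,c⟩ ⟨⟨d,e⟩,f⟩ h; simp_all)

lemma sh132 {Ω : Type*} [MeasurableSpace Ω] (μ : Measure Ω)
    {A B C : Type*} [Fintype A] [Fintype B] [Fintype C] (X : Ω → A) (Y : Ω → B) (Z : Ω → C) :
    shEntropy μ (fun ω => ((X ω, Z ω), Y ω)) = shEntropy μ (fun ω => ((X ω, Y ω), Z ω)) := by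
  simpa using shEntropy_comp_inj μ (fun ω => ((X ω, Y ω), Z ω)) (fun p => ((p.1.1, p.2), p.1.2))
    (by rintro ⟨⟨a,b⟩,c⟩ ⟨⟨d,e⟩,f⟩ h; simp_all)

lemma sh321 {Ω : Type*} [MeasurableSpace Ω] (μ : Measure Ω)
    {A B C : Type*} [Fintype A] [Fintype B] [Fintype C] (X : Ω → A) (Y : Ω → B) (Z : Ω → C) :
    shEntropy μ (fun ω => ((Z ω, Y ω), X ω)) = shEntropy μ (fun ω => ((X ω, Y ω), Z ω)) := by
  simpa using shEntropy_comp_inj μ (fun ω => ((X ω, Y ω), Z ω)) (fun p => ((p.2, p.1.2), p.1.1))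
    (by rintro ⟨⟨a,b⟩,c⟩ ⟨⟨d,e⟩,f⟩ h; simp_all)

lemma sh231 {Ω : Type*} [MeasurableSpace Ω] (μ : Measure Ω)
    {A B C : Type*} [Fintype A] [Fintype B] [Fintype C] (X : Ω → A) (Y : Ω → B) (Z : Ω → C) :
    shEntropy μ (fun ω => ((Y ω, Z ω), X ω)) = shEntropy μ (fun ω => ((X ω, Y ω), Z ω)) := by
  simpa using shEntropy_comp_inj μ (fun ω => ((X ω, Y ω), Z ω)) (fun p => ((p.1.2, p.2), p.1.1))
    (by rintro ⟨⟨a,b⟩,c⟩ ⟨⟨d,e⟩,f⟩ h; simp_all)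

lemma sh312 {Ω : Type*} [MeasurableSpace Ω] (μ : Measure Ω)
    {A B C : Type*} [Fintype A] [Fintype B] [Fintype C] (X : Ω → A) (Y : Ω → B) (Z : Ω → C) :
    shEntropy μ (fun ω => ((Z ω, X ω), Y ω)) = shEntropy μ (fun ω => ((X ω, Y ω), Z ω)) := by
  simpa using shEntropy_comp_inj μ (fun ω => ((X ω, Y ω), Z ω)) (fun p => ((p.2, p.1.1), p.1.2))
    (by rintro ⟨⟨a,b⟩,c⟩ ⟨⟨d,e⟩,f⟩ h; simp_all)

theorem stmt0 {Ω : Type*} [MeasurableSpace Ω] (μ : Measure Ω) [IsProbabilityMeasure μ]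
    {α : Fin 3 → Type*} [∀ i, Fintype (α i)] [∀ i, Nonempty (α i)]
    [∀ i, MeasurableSpace (α i)]
    (W : ∀ i, Ω → α i) (hW : ∀ i, Measurable (W i))
    (habcmi : ∀ i j k : Fin 3, i ≠ j → j ≠ k → i ≠ k →
      shCondMutualInfo μ (W i) (W j) (W k) ≤
        shCondMutualInfo μ (W j) (W k) (W i) + shCondMutualInfo μ (W i) (W k) (W j))
    (κ δ : ℝ) (hκ : 0 < κ) (hδ : 0 < δ) :
    ∃ R : Fin 3 → ℝ, (∀ i, 0 < R i) ∧
      (∀ i j k : Fin 3, i ≠ j → j ≠ k → i ≠ k →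
        κ * R i ≥ shCondEntropy μ (W i) (fun ω => (W j ω, W k ω)) + δ / 4) ∧
      (∀ i j k : Fin 3, i ≠ j → j ≠ k → i ≠ k →
        κ * (R i + R j) = shCondEntropy μ (fun ω => (W i ω, W j ω)) (W k) + δ / 2) := by
  have hb0 := habcmi 1 2 0 (by decide) (by decide) (by decide)
  have hb1 := habcmi 2 0 1 (by decide) (by decide) (by decide)
  have hb2 := habcmi 0 1 2 (by decide) (by decide) (by decide)
  have hn0 := shCondEntropy_nonneg μ (W 0) (fun ω => (W 1 ω, W 2 ω))
  have hn1 := shCondEntropy_nonneg μ (W 1) (fun ω => (W 0 ω, W 2 ω))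
  have hn2 := shCondEntropy_nonneg μ (W 2) (fun ω => (W 0 ω, W 1 ω))
  simp only [shCondMutualInfo, shCondEntropy] at hb0 hb1 hb2 hn0 hn1 hn2
  have p10 := sh_pair_comm μ (W 0) (W 1)
  have p20 := sh_pair_comm μ (W 0) (W 2)
  have p21 := sh_pair_comm μ (W 1) (W 2)
  have t102 := sh213 μ (W 0) (W 1) (W 2)
  have t021 := sh132 μ (W 0) (W 1) (W 2)
  have t210 := sh321 μ (W 0) (W 1) (W 2)
  have t120 := sh231 μ (W 0) (W 1) (W 2)
  have t201 := sh312 μ (W 0) (W 1) (W 2)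
  have a012 := sh_assoc μ (W 0) (W 1) (W 2)
  have a021 := (sh_assoc μ (W 0) (W 2) (W 1)).trans (sh132 μ (W 0) (W 1) (W 2))
  have a102 := (sh_assoc μ (W 1) (W 0) (W 2)).trans (sh213 μ (W 0) (W 1) (W 2))
  have a120 := (sh_assoc μ (W 1) (W 2) (W 0)).trans (sh231 μ (W 0) (W 1) (W 2))
  have a201 := (sh_assoc μ (W 2) (W 0) (W 1)).trans (sh312 μ (W 0) (W 1) (W 2))
  have a210 := (sh_assoc μ (W 2) (W 1) (W 0)).trans (sh321 μ (W 0) (W 1) (W 2))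
  set T := shEntropy μ (fun ω => ((W 0 ω, W 1 ω), W 2 ω)) with hT
  set e0 := shEntropy μ (W 0) with he0
  set e1 := shEntropy μ (W 1) with he1
  set e2 := shEntropy μ (W 2) with he2
  set e01 := shEntropy μ (fun ω => (W 0 ω, W 1 ω)) with he01
  set e02 := shEntropy μ (fun ω => (W 0 ω, W 2 ω)) with he02
  set e12 := shEntropy μ (fun ω => (W 1 ω, W 2 ω)) with he12
  have hκ' : κ ≠ 0 := hκ.ne'
  have hmul : ∀ x : ℝ, κ * (x / (2 * κ)) = x / 2 := by
    intro x; field_simp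
  refine ⟨![(T + e0 - e1 - e2 + δ / 2) / (2 * κ), (T - e0 + e1 - e2 + δ / 2) / (2 * κ),
      (T - e0 - e1 + e2 + δ / 2) / (2 * κ)], ?_, ?_, ?_⟩
  · intro i
    fin_cases i <;>
      simp only [Fin.mk_zero, Fin.mk_one, Fin.reduceFinMk, Fin.isValue, Matrix.cons_val_zero, Matrix.cons_val_one, Matrix.head_cons,
        Matrix.cons_val_two, Matrix.tail_cons] <;>
      refine div_pos (by linarith) (by linarith)
  · intro i j k h1 h2 h3
    fin_cases i <;> fin_cases j <;> fin_cases k <;>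
      first
      | exact absurd rfl h1
      | exact absurd rfl h2
      | exact absurd rfl h3
      | (simp only [Fin.mk_zero, Fin.mk_one, Fin.reduceFinMk, Fin.isValue, shCondEntropy, Matrix.cons_val_zero, Matrix.cons_val_one, Matrix.head_cons,
          Matrix.cons_val_two, Matrix.tail_cons, ge_iff_le, hmul]
         linarith)
  · intro i j k h1 h2 h3
    fin_cases i <;> fin_cases j <;> fin_cases k <;>
      first
      | exact absurd rfl h1
      | exact absurd rfl h2
      | exact absurd rfl h3
      | (simp only [Fin.mk_zero, Fin.mk_one, Fin.reduceFinMk, Fin.isValue, shCondEntropy, Matrix.cons_val_zero, Matrix.cons_val_one, Matrix.head_cons,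
          Matrix.cons_val_two, Matrix.tail_cons, mul_add, hmul]
         linarith)
end

section
/- Let (W1, W2, W3) be finite-valued random variables with ABCMI, let F ≥ 2 be a natural number, and let h0, h1, h2, h3 be real numbers with 0 ≤ h_d < log F for each d ∈ {0,1,2,3} (the entropies of the uplink and downlink noises). For any real δ > 0, define κ := max over distinct i,j,k ∈ {1,2,3} of ( H[(W_j, W_k) | W_i] + δ ) / ( log F − max{h0, h_i} ). Then there exist positive real numbers R1, R2, R3 such that for all distinct i, j, k ∈ {1,2,3}: κ·R_i > H[W_i | (W_j, W_k)], κ·(R_i + R_j) > H[(W_i, W_j) | W_k], and R_j + R_k < log F − max{h0, h_i}. -/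
open MeasureTheory ProbabilityTheory

/-! Write `H s` for the joint entropy of `(W x)_{x ∈ s}`, and put `a i = H univ - H {i}`
(that is `H[W_j, W_k | W_i]`) and `b i = H univ - H {i}ᶜ` (that is `H[W_i | W_j, W_k]`).
In these terms ABCMI says `2 b_i ≤ a_j + a_k - a_i`, and the rates with
`κ R_i = (a_j + a_k - a_i) / 2 + δ / 4` work: `κ R_i > b_i`, `κ (R_i + R_j) = a_k + δ / 2`,
and `R_j + R_k = (a_i + δ / 2) / κ`, which is below `log F - max h0 (h i)` because `κ` was
chosen so that `a_i + δ ≤ κ (log F - max h0 (h i))`. -/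

section Entropy

variable {Ω : Type*} [MeasurableSpace Ω] (μ : Measure Ω)

lemma shEntropy_comp_of_injective {β γ : Type*} [Fintype β] [Fintype γ] (X : Ω → β)
    {e : β → γ} (he : Function.Injective e) :
    shEntropy μ (fun ω => e (X ω)) = shEntropy μ X := by
  classical
  unfold shEntropy
  congr 1
  have h_off_range : ∀ y ∈ Finset.univ, y ∉ Finset.univ.image e →
      (μ ((fun ω => e (X ω)) ⁻¹' {y})).toReal *
        Real.log (μ ((fun ω => e (X ω)) ⁻¹' {y})).toReal = 0 := by
    intro y _ hy
    have : (fun ω => e (X ω)) ⁻¹' {y} = ∅ :=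
      Set.eq_empty_of_forall_notMem fun ω hω =>
        hy (Finset.mem_image.mpr ⟨X ω, Finset.mem_univ _, hω⟩)
    simp [this]
  rw [← Finset.sum_subset (Finset.subset_univ _) h_off_range,
    Finset.sum_image fun x _ x' _ hxx => he hxx]
  refine Finset.sum_congr rfl fun x _ => ?_
  have : (fun ω => e (X ω)) ⁻¹' {e x} = X ⁻¹' {x} := by ext ω; simp [he.eq_iff]
  rw [this]

lemma sum_mul_log_le_mul_log {ι : Type*} [Fintype ι] {p : ι → ℝ} {q : ℝ}
    (hp : ∀ x, 0 ≤ p x) (hpq : ∀ x, p x ≤ q) (hq0 : 0 ≤ q) (hq1 : q ≤ 1)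
    (hq_sum : q ≤ ∑ x, p x) :
    ∑ x, p x * Real.log (p x) ≤ q * Real.log q := by
  calc ∑ x, p x * Real.log (p x) ≤ ∑ x, p x * Real.log q := by
        refine Finset.sum_le_sum fun x _ => ?_
        rcases (hp x).eq_or_lt with hx | hx
        · simp [← hx]
        · exact mul_le_mul_of_nonneg_left (Real.log_le_log hx (hpq x)) (hp x)
    _ = (∑ x, p x) * Real.log q := by rw [Finset.sum_mul]
    _ ≤ q * Real.log q := mul_le_mul_of_nonpos_right hq_sum (Real.log_nonpos hq0 hq1)

-- Without measurability of `X` and `Y` only subadditivity of `μ` is available, not additivity.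
lemma toReal_measure_preimage_le_sum {β γ : Type*} [Fintype β] [IsFiniteMeasure μ]
    (X : Ω → β) (Y : Ω → γ) (y : γ) :
    (μ (Y ⁻¹' {y})).toReal ≤ ∑ x, (μ ((fun ω => (X ω, Y ω)) ⁻¹' {(x, y)})).toReal := by
  have hcover : Y ⁻¹' {y} ⊆ ⋃ x, (fun ω => (X ω, Y ω)) ⁻¹' {(x, y)} := fun ω hω =>
    Set.mem_iUnion.mpr ⟨X ω, by simpa using hω⟩
  rw [← ENNReal.toReal_sum fun _ _ => measure_ne_top μ _]
  refine ENNReal.toReal_mono (ENNReal.sum_ne_top.mpr fun _ _ => measure_ne_top μ _) ?_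
  exact (measure_mono hcover).trans ((measure_iUnion_le _).trans_eq (tsum_fintype _))

lemma shEntropy_le_shEntropy_prod [IsProbabilityMeasure μ] {β γ : Type*} [Fintype β] [Fintype γ]
    (X : Ω → β) (Y : Ω → γ) :
    shEntropy μ Y ≤ shEntropy μ (fun ω => (X ω, Y ω)) := by
  unfold shEntropy
  rw [neg_le_neg_iff, Fintype.sum_prod_type, Finset.sum_comm]
  refine Finset.sum_le_sum fun y _ => sum_mul_log_le_mul_log (fun _ => ENNReal.toReal_nonneg)
    (fun x => ?_) ENNReal.toReal_nonneg measureReal_le_one (toReal_measure_preimage_le_sum μ X Y y)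
  refine ENNReal.toReal_mono (measure_ne_top μ _) (measure_mono fun ω hω => ?_)
  simp_all

end Entropy

section JointEntropy

variable {Ω : Type*} [MeasurableSpace Ω] (μ : Measure Ω) {ι : Type*} [DecidableEq ι]
  {α : ι → Type*} [∀ i, Fintype (α i)] (W : ∀ i, Ω → α i)

noncomputable def jointEntropy (s : Finset ι) : ℝ :=
  shEntropy μ (fun ω (x : s) => W x ω)

lemma shEntropy_comp_eq_jointEntropy {s : Finset ι} {β : Type*} [Fintype β]
    {e : (∀ x : s, α x) → β} (he : Function.Injective e) :
    shEntropy μ (fun ω => e fun x => W x ω) = jointEntropy μ W s :=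
  shEntropy_comp_of_injective μ _ he

lemma jointEntropy_mono [IsProbabilityMeasure μ] {s t : Finset ι} (hst : s ⊆ t) :
    jointEntropy μ W s ≤ jointEntropy μ W t := by
  rw [← shEntropy_comp_eq_jointEntropy μ W (s := t)
    (e := fun f => (f, fun x : s => f ⟨x, hst x.2⟩)) fun f g hfg => (Prod.mk.inj hfg).1]
  exact shEntropy_le_shEntropy_prod μ _ _

lemma shEntropy_eq_jointEntropy_singleton (i : ι) :
    shEntropy μ (W i) = jointEntropy μ W {i} :=
  shEntropy_comp_eq_jointEntropy μ W (e := fun f => f ⟨i, Finset.mem_singleton_self i⟩)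
    fun f g hfg => by
      funext ⟨x, hx⟩
      obtain rfl := Finset.mem_singleton.mp hx
      exact hfg

lemma shEntropy_pair_eq_jointEntropy (i j : ι) :
    shEntropy μ (fun ω => (W i ω, W j ω)) = jointEntropy μ W {i, j} := by
  have hi : i ∈ ({i, j} : Finset ι) := by simp
  have hj : j ∈ ({i, j} : Finset ι) := by simp
  refine shEntropy_comp_eq_jointEntropy μ W (e := fun f => (f ⟨i, hi⟩, f ⟨j, hj⟩))
    fun f g hfg => ?_
  simp only [Prod.mk.injEq] at hfg
  funext ⟨x, hx⟩
  simp only [Finset.mem_insert, Finset.mem_singleton] at hx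
  rcases hx with rfl | rfl
  exacts [hfg.1, hfg.2]

lemma shEntropy_triple_eq_jointEntropy (i j k : ι) :
    shEntropy μ (fun ω => ((W i ω, W j ω), W k ω)) = jointEntropy μ W {i, j, k} := by
  have hi : i ∈ ({i, j, k} : Finset ι) := by simp
  have hj : j ∈ ({i, j, k} : Finset ι) := by simp
  have hk : k ∈ ({i, j, k} : Finset ι) := by simp
  refine shEntropy_comp_eq_jointEntropy μ W
    (e := fun f => ((f ⟨i, hi⟩, f ⟨j, hj⟩), f ⟨k, hk⟩)) fun f g hfg => ?_
  simp only [Prod.mk.injEq] at hfg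
  funext ⟨x, hx⟩
  simp only [Finset.mem_insert, Finset.mem_singleton] at hx
  rcases hx with rfl | rfl | rfl
  exacts [hfg.1.1, hfg.1.2, hfg.2]

lemma shEntropy_triple_eq_jointEntropy' (i j k : ι) :
    shEntropy μ (fun ω => (W i ω, (W j ω, W k ω))) = jointEntropy μ W {i, j, k} := by
  rw [← shEntropy_triple_eq_jointEntropy,
    ← shEntropy_comp_of_injective μ _ (Equiv.prodAssoc _ _ _).injective]
  rfl

end JointEntropy

namespace Fin

variable {i j k : Fin 3}

lemma exists_ne_ne (k : Fin 3) : ∃ i j : Fin 3, i ≠ j ∧ j ≠ k ∧ i ≠ k := by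
  revert k; decide

lemma insert_insert_singleton_eq_univ (hij : i ≠ j) (hjk : j ≠ k) (hik : i ≠ k) :
    ({i, j, k} : Finset (Fin 3)) = Finset.univ :=
  Finset.eq_univ_of_card _ (Finset.card_eq_three.mpr ⟨i, j, k, hij, hik, hjk, rfl⟩)

lemma insert_singleton_eq_compl_singleton (hij : i ≠ j) (hjk : j ≠ k) (hik : i ≠ k) :
    ({i, j} : Finset (Fin 3)) = {k}ᶜ := by
  revert i j k; decide

lemma add_add_eq_sum {M : Type*} [AddCommMonoid M] (f : Fin 3 → M)
    (hij : i ≠ j) (hjk : j ≠ k) (hik : i ≠ k) :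
    f i + f j + f k = ∑ l, f l := by
  rw [← insert_insert_singleton_eq_univ hij hjk hik, Finset.sum_insert (by simp [hij, hik]),
    Finset.sum_pair hjk, add_assoc]

end Fin

section ThreeSources

variable {Ω : Type*} [MeasurableSpace Ω] (μ : Measure Ω) {α : Fin 3 → Type*}
  [∀ i, Fintype (α i)] (W : ∀ i, Ω → α i) {i j k : Fin 3}

local notation "H" => jointEntropy μ W

lemma shCondEntropy_pair_eq (hij : i ≠ j) (hjk : j ≠ k) (hik : i ≠ k) :
    shCondEntropy μ (fun ω => (W i ω, W j ω)) (W k) = H Finset.univ - H {k} := by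
  rw [shCondEntropy, shEntropy_triple_eq_jointEntropy, shEntropy_eq_jointEntropy_singleton,
    Fin.insert_insert_singleton_eq_univ hij hjk hik]

lemma shCondEntropy_of_pair_eq (hij : i ≠ j) (hjk : j ≠ k) (hik : i ≠ k) :
    shCondEntropy μ (W i) (fun ω => (W j ω, W k ω)) = H Finset.univ - H {i}ᶜ := by
  rw [shCondEntropy, shEntropy_triple_eq_jointEntropy', shEntropy_pair_eq_jointEntropy,
    Fin.insert_insert_singleton_eq_univ hij hjk hik,
    Fin.insert_singleton_eq_compl_singleton hjk hik.symm hij.symm]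

lemma shCondMutualInfo_eq (hij : i ≠ j) (hjk : j ≠ k) (hik : i ≠ k) :
    shCondMutualInfo μ (W i) (W j) (W k) = H {j}ᶜ + H {i}ᶜ - H Finset.univ - H {k} := by
  rw [shCondMutualInfo, shCondEntropy_pair_eq μ W hij hjk hik, shCondEntropy, shCondEntropy,
    shEntropy_pair_eq_jointEntropy, shEntropy_pair_eq_jointEntropy,
    shEntropy_eq_jointEntropy_singleton, Fin.insert_singleton_eq_compl_singleton hik hjk.symm hij,
    Fin.insert_singleton_eq_compl_singleton hjk hik.symm hij.symm]
  ring

lemma jointEntropy_add_add_le_of_abcmi (hij : i ≠ j) (hjk : j ≠ k) (hik : i ≠ k)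
    (habcmi : shCondMutualInfo μ (W i) (W j) (W k) ≤
      shCondMutualInfo μ (W j) (W k) (W i) + shCondMutualInfo μ (W i) (W k) (W j)) :
    H Finset.univ + H {i} + H {j} ≤ H {k} + 2 * H {k}ᶜ := by
  rw [shCondMutualInfo_eq μ W hij hjk hik, shCondMutualInfo_eq μ W hjk hik.symm hij.symm,
    shCondMutualInfo_eq μ W hik hjk.symm hij] at habcmi
  linarith

end ThreeSources

lemma exists_pos_rates {a b D : Fin 3 → ℝ} {δ κ : ℝ} (hδ : 0 < δ) (hD : ∀ i, 0 < D i)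
    (hb : ∀ i, 0 ≤ b i) (hab : ∀ i, 2 * b i ≤ ∑ l, a l - 2 * a i)
    (hκ : ∀ i, a i + δ ≤ κ * D i) :
    ∃ R : Fin 3 → ℝ, (∀ i, 0 < R i) ∧ ∀ i j k : Fin 3, i ≠ j → j ≠ k → i ≠ k →
      b i < κ * R i ∧ a k < κ * (R i + R j) ∧ R j + R k < D i := by
  have ha₀ : 0 ≤ a 0 := by
    have := hab 1; have := hab 2; have := hb 1; have := hb 2
    rw [Fin.sum_univ_three] at *
    linarith
  have hκ₀ : 0 < κ := pos_of_mul_pos_left ((add_pos_of_nonneg_of_pos ha₀ hδ).trans_le (hκ 0)) (hD 0).le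
  set R : Fin 3 → ℝ := fun i => (∑ l, a l - 2 * a i + δ / 2) / (2 * κ)
  have hκR : ∀ i, κ * R i = (∑ l, a l - 2 * a i) / 2 + δ / 4 := fun i => by
    simp only [R]; field_simp; ring
  refine ⟨R, fun i => pos_of_mul_pos_right ?_ hκ₀.le, fun i j k hij hjk hik => ?_⟩
  · linarith [hκR i, hab i, hb i]
  have hsum := Fin.add_add_eq_sum a hij hjk hik
  have hRjk : κ * (R j + R k) < κ * D i := by
    linarith [mul_add κ (R j) (R k), hκR j, hκR k, hκ i]
  refine ⟨by linarith [hκR i, hab i], ?_, lt_of_mul_lt_mul_left hRjk hκ₀.le⟩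
  linarith [mul_add κ (R i) (R j), hκR i, hκR j]

theorem stmt3 {Ω : Type*} [MeasurableSpace Ω] (μ : Measure Ω) [IsProbabilityMeasure μ]
    {α : Fin 3 → Type*} [∀ i, Fintype (α i)]
    (W : ∀ i, Ω → α i)
    (habcmi : ∀ i j k : Fin 3, i ≠ j → j ≠ k → i ≠ k →
      shCondMutualInfo μ (W i) (W j) (W k) ≤
        shCondMutualInfo μ (W j) (W k) (W i) + shCondMutualInfo μ (W i) (W k) (W j))
    (F : ℕ) (h0 : ℝ) (h : Fin 3 → ℝ)
    (hh0 : 0 ≤ h0 ∧ h0 < Real.log F) (hh : ∀ i, 0 ≤ h i ∧ h i < Real.log F)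
    (δ : ℝ) (hδ : 0 < δ) (κ : ℝ)
    (hκ : κ = ((Finset.univ : Finset (Fin 3 × Fin 3 × Fin 3)).filter
        (fun p => p.1 ≠ p.2.1 ∧ p.2.1 ≠ p.2.2 ∧ p.1 ≠ p.2.2)).sup'
        (by decide)
        (fun p => (shCondEntropy μ (fun ω => (W p.2.1 ω, W p.2.2 ω)) (W p.1) + δ) /
          (Real.log F - max h0 (h p.1)))) :
    ∃ R : Fin 3 → ℝ, (∀ i, 0 < R i) ∧
      ∀ i j k : Fin 3, i ≠ j → j ≠ k → i ≠ k →
        κ * R i > shCondEntropy μ (W i) (fun ω => (W j ω, W k ω)) ∧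
        κ * (R i + R j) > shCondEntropy μ (fun ω => (W i ω, W j ω)) (W k) ∧
        R j + R k < Real.log F - max h0 (h i) := by
  have hD : ∀ i, 0 < Real.log F - max h0 (h i) := fun i => sub_pos.mpr (max_lt hh0.2 (hh i).2)
  have hab : ∀ k, 2 * (jointEntropy μ W Finset.univ - jointEntropy μ W {k}ᶜ) ≤
      ∑ l, (jointEntropy μ W Finset.univ - jointEntropy μ W {l}) -
        2 * (jointEntropy μ W Finset.univ - jointEntropy μ W {k}) := fun k => by
    obtain ⟨i, j, hij, hjk, hik⟩ := Fin.exists_ne_ne k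
    rw [← Fin.add_add_eq_sum _ hij hjk hik]
    linarith [jointEntropy_add_add_le_of_abcmi μ W hij hjk hik (habcmi i j k hij hjk hik)]
  have hκ_ge : ∀ i, jointEntropy μ W Finset.univ - jointEntropy μ W {i} + δ ≤
      κ * (Real.log F - max h0 (h i)) := fun i => by
    obtain ⟨j, k, hjk, hki, hji⟩ := Fin.exists_ne_ne i
    have hmem : (i, j, k) ∈ (Finset.univ : Finset (Fin 3 × Fin 3 × Fin 3)).filter
        (fun p => p.1 ≠ p.2.1 ∧ p.2.1 ≠ p.2.2 ∧ p.1 ≠ p.2.2) := by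
      simp [hji.symm, hjk, hki.symm]
    have := hκ ▸ Finset.le_sup' _ hmem
    rwa [shCondEntropy_pair_eq μ W hjk hki hji, div_le_iff₀ (hD i)] at this
  obtain ⟨R, hR_pos, hR⟩ := exists_pos_rates hδ hD
    (fun i => sub_nonneg.mpr (jointEntropy_mono μ W (Finset.subset_univ {i}ᶜ))) hab hκ_ge
  refine ⟨R, hR_pos, fun i j k hij hjk hik => ?_⟩
  rw [shCondEntropy_of_pair_eq μ W hij hjk hik, shCondEntropy_pair_eq μ W hij hjk hik]
  exact hR i j k hij hjk hik
end
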